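/- Let J_α(v) := ∫_{ℝ³} |v−w|^α μ(w) dw where μ(w) = (2π)^{−3/2} e^{−|w|²/2}. If 2 < α ≤ 3, then there exists a constant C_α > 0 such that J_α(v) ≤ |v|^α + C_α |v|^{α/2} + C_α for all v ∈ ℝ³. -/

import Mathlib

open MeasureTheory Real

noncomputable section

abbrev R3 := EuclideanSpace ℝ (Fin 3)

/-- The standard Maxwellian (Gaussian) on ℝ³. -/
def mu (w : R3) : ℝ := (2 * π) ^ (-(3:ℝ)/2) * Real.exp (-‖w‖ ^ 2 / 2)

/-!
Average the integrand over `w` and `-w`, which leaves the integral unchanged since the Maxwellian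
is even. With `p = α / 2 ∈ [1, 2]`, `s = ‖v‖² + ‖w‖²` and `x = 2⟪v, w⟫` one has
`‖v ∓ w‖ ^ α = (s ∓ x) ^ p`, and `(s + x) ^ p + (s - x) ^ p ≤ 2 s ^ p + 2 |x| ^ p`: the term
linear in `w`, of size `‖v‖ ^ (α - 1)`, cancels. Expanding
`s ^ p ≤ ‖v‖ ^ α + p ‖v‖ ^ (α - 2) ‖w‖² + p ‖w‖ ^ α` and bounding `|x| ^ p ≤ (2 ‖v‖ ‖w‖) ^ p`,
integration against the Gaussian (whose moments are all finite) leaves `‖v‖ ^ α` plus multiples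
of `‖v‖ ^ (α - 2)`, `‖v‖ ^ (α / 2)` and `1`, and `‖v‖ ^ (α - 2) ≤ 1 + ‖v‖ ^ (α / 2)` because
`0 ≤ α - 2 ≤ α / 2`.
-/

open Set RealInnerProductSpace

theorem add_rpow_add_sub_rpow_le {p s x : ℝ} (hp1 : 1 ≤ p) (hp2 : p ≤ 2) (hxs : |x| ≤ s) :
    (s + x) ^ p + (s - x) ^ p ≤ 2 * s ^ p + 2 * |x| ^ p := by
  wlog hx : 0 ≤ x generalizing x
  · have := this (x := -x) (by rwa [abs_neg]) (by linarith)
    rw [abs_neg, ← sub_eq_add_neg, sub_neg_eq_add] at this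
    linarith
  rw [abs_of_nonneg hx] at hxs ⊢
  set g : ℝ → ℝ := fun y => 2 * s ^ p + 2 * y ^ p - (s + y) ^ p - (s - y) ^ p
  have hderiv (y : ℝ) : HasDerivAt g
      (2 * (p * y ^ (p - 1)) - 1 * p * (s + y) ^ (p - 1) - (-1) * p * (s - y) ^ (p - 1)) y :=
    (((hasDerivAt_rpow_const (Or.inr hp1)).const_mul 2).const_add _).sub
      (((hasDerivAt_id y).const_add s).rpow_const (Or.inr hp1)) |>.sub
      (((hasDerivAt_id y).const_sub s).rpow_const (Or.inr hp1))
  have hmono : MonotoneOn g (Icc 0 s) := by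
    refine monotoneOn_of_hasDerivWithinAt_nonneg (convex_Icc 0 s)
      (fun y _ => (hderiv y).continuousAt.continuousWithinAt)
      (fun y _ => (hderiv y).hasDerivWithinAt) fun y hy => ?_
    rw [interior_Icc] at hy
    have hsub : (s + y) ^ (p - 1) ≤ (s - y) ^ (p - 1) + 2 * y ^ (p - 1) := calc
      (s + y) ^ (p - 1) = ((s - y) + 2 * y) ^ (p - 1) := by ring_nf
      _ ≤ (s - y) ^ (p - 1) + (2 * y) ^ (p - 1) :=
        rpow_add_le_add_rpow (by linarith [hy.2]) (by linarith [hy.1]) (by linarith) (by linarith)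
      _ ≤ (s - y) ^ (p - 1) + 2 * y ^ (p - 1) := by
        have h2 : (2 : ℝ) ^ (p - 1) ≤ 2 := by
          simpa using rpow_le_rpow_of_exponent_le one_le_two (by linarith : p - 1 ≤ 1)
        rw [mul_rpow zero_le_two hy.1.le]
        gcongr
        exact rpow_nonneg hy.1.le _
    nlinarith [rpow_nonneg hy.1.le (p - 1)]
  have hg0 : g 0 = 0 := by
    simp only [g, zero_rpow (by linarith : p ≠ 0), mul_zero, add_zero, sub_zero]; ring
  have := hmono ⟨le_rfl, hx.trans hxs⟩ ⟨hx, hxs⟩ hx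
  simp only [hg0, g] at this
  linarith

theorem add_rpow_sub_rpow_le {p A B : ℝ} (hp : 1 ≤ p) (hA : 0 ≤ A) (hB : 0 ≤ B) :
    (A + B) ^ p - A ^ p ≤ p * (A + B) ^ (p - 1) * B := by
  rcases hB.eq_or_lt with rfl | hB
  · simp
  have := (convexOn_rpow hp).slope_le_of_hasDerivAt hA (add_nonneg hA hB.le) (by linarith)
    (hasDerivAt_rpow_const (x := A + B) (Or.inr hp))
  rwa [slope_def_field, add_sub_cancel_left, div_le_iff₀ hB] at this

theorem add_rpow_le_rpow_add_mul_add_rpow {p A B : ℝ} (hp1 : 1 ≤ p) (hp2 : p ≤ 2)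
    (hA : 0 ≤ A) (hB : 0 ≤ B) :
    (A + B) ^ p ≤ A ^ p + p * A ^ (p - 1) * B + p * B ^ p := by
  have hsub : (A + B) ^ (p - 1) ≤ A ^ (p - 1) + B ^ (p - 1) :=
    rpow_add_le_add_rpow hA hB (by linarith) (by linarith)
  have hBp : B ^ p = B ^ (p - 1) * B := by
    rw [← rpow_add_one' hB (by linarith), sub_add_cancel]
  have := add_rpow_sub_rpow_le hp1 hA hB
  rw [hBp]
  nlinarith [mul_le_mul_of_nonneg_left hsub (by positivity : 0 ≤ p * B)]

theorem rpow_le_one_add_rpow {x a b : ℝ} (hx : 0 ≤ x) (ha : 0 ≤ a) (hab : a ≤ b) :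
    x ^ a ≤ 1 + x ^ b := by
  rcases le_total x 1 with h | h
  · linarith [rpow_le_one hx h ha, rpow_nonneg hx b]
  · linarith [rpow_le_rpow_of_exponent_le h hab]

theorem rpow_norm_sub_add_rpow_norm_add_le {E : Type*} [NormedAddCommGroup E]
    [InnerProductSpace ℝ E] {α : ℝ} (h2 : 2 ≤ α) (h4 : α ≤ 4) (v w : E) :
    (‖v - w‖ ^ α + ‖v + w‖ ^ α) / 2 ≤ ‖v‖ ^ α + α / 2 * ‖v‖ ^ (α - 2) * ‖w‖ ^ 2
      + α / 2 * ‖w‖ ^ α + 2 ^ (α / 2) * ‖v‖ ^ (α / 2) * ‖w‖ ^ (α / 2) := by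
  have hsq {t : ℝ} (ht : 0 ≤ t) (q : ℝ) : (t ^ 2) ^ (q / 2) = t ^ q := by
    rw [← rpow_natCast_mul ht, Nat.cast_ofNat, mul_div_cancel₀ q two_ne_zero]
  set s := ‖v‖ ^ 2 + ‖w‖ ^ 2
  set x := 2 * ⟪v, w⟫
  have hsum : ‖v - w‖ ^ α + ‖v + w‖ ^ α ≤ 2 * s ^ (α / 2) + 2 * |x| ^ (α / 2) := by
    have hsub : ‖v - w‖ ^ 2 = s - x := by rw [norm_sub_sq_real]; ring
    have hadd : ‖v + w‖ ^ 2 = s + x := by rw [norm_add_sq_real]; ring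
    have hxs : |x| ≤ s := by
      rw [abs_le]; constructor <;> nlinarith [norm_nonneg (v - w), norm_nonneg (v + w)]
    rw [← hsq (norm_nonneg (v - w)), ← hsq (norm_nonneg (v + w)), hsub, hadd]
    linarith [add_rpow_add_sub_rpow_le (p := α / 2) (by linarith) (by linarith) hxs]
  have hs : s ^ (α / 2) ≤ ‖v‖ ^ α + α / 2 * ‖v‖ ^ (α - 2) * ‖w‖ ^ 2 + α / 2 * ‖w‖ ^ α := by
    have := add_rpow_le_rpow_add_mul_add_rpow (p := α / 2) (by linarith) (by linarith)
      (sq_nonneg ‖v‖) (sq_nonneg ‖w‖)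
    rwa [hsq (norm_nonneg v), hsq (norm_nonneg w), show α / 2 - 1 = (α - 2) / 2 by ring,
      hsq (norm_nonneg v)] at this
  have hcross : |x| ^ (α / 2) ≤ 2 ^ (α / 2) * ‖v‖ ^ (α / 2) * ‖w‖ ^ (α / 2) := by
    have : |x| ≤ 2 * ‖v‖ * ‖w‖ := by
      rw [abs_mul, abs_two, mul_assoc]; gcongr; exact abs_real_inner_le_norm v w
    rw [← mul_rpow zero_le_two (norm_nonneg v), ← mul_rpow (by positivity) (norm_nonneg w)]
    exact rpow_le_rpow (abs_nonneg x) this (by linarith)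
  linarith

section SymmetricMeasure

variable {E : Type*} [NormedAddCommGroup E] [MeasurableSpace E] [BorelSpace E] (ν : Measure E)

theorem integrable_rpow_norm_of_le [IsFiniteMeasure ν] {α β : ℝ}
    (hα : Integrable (fun w => ‖w‖ ^ α) ν) (hβ : 0 ≤ β) (hβα : β ≤ α) :
    Integrable (fun w => ‖w‖ ^ β) ν :=
  ((integrable_const 1).add hα).mono' (by fun_prop) <| ae_of_all _ fun w => by
    rw [norm_of_nonneg (rpow_nonneg (norm_nonneg w) β)]
    exact rpow_le_one_add_rpow (norm_nonneg w) hβ hβα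

theorem integral_rpow_norm_sub_le [InnerProductSpace ℝ E] [IsProbabilityMeasure ν]
    [ν.IsNegInvariant] {α : ℝ} (h2 : 2 ≤ α) (h4 : α ≤ 4)
    (hα : Integrable (fun w => ‖w‖ ^ α) ν) (v : E) :
    ∫ w, ‖v - w‖ ^ α ∂ν ≤ ‖v‖ ^ α + α / 2 * ‖v‖ ^ (α - 2) * ∫ w, ‖w‖ ^ 2 ∂ν
      + α / 2 * ∫ w, ‖w‖ ^ α ∂ν + 2 ^ (α / 2) * ‖v‖ ^ (α / 2) * ∫ w, ‖w‖ ^ (α / 2) ∂ν := by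
  have hsq : Integrable (fun w => ‖w‖ ^ 2) ν := by
    simpa using integrable_rpow_norm_of_le ν hα zero_le_two h2
  have hhalf : Integrable (fun w => ‖w‖ ^ (α / 2)) ν :=
    integrable_rpow_norm_of_le ν hα (by linarith) (by linarith)
  set g : E → ℝ := fun w => ‖v‖ ^ α + α / 2 * ‖v‖ ^ (α - 2) * ‖w‖ ^ 2
      + α / 2 * ‖w‖ ^ α + 2 ^ (α / 2) * ‖v‖ ^ (α / 2) * ‖w‖ ^ (α / 2)
  have hg₁ := (integrable_const (‖v‖ ^ α)).fun_add (hsq.const_mul (α / 2 * ‖v‖ ^ (α - 2)))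
  have hg₂ := hg₁.fun_add (hα.const_mul (α / 2))
  have hg : Integrable g ν := hg₂.add (hhalf.const_mul _)
  have hpt : ∀ w, (‖v - w‖ ^ α + ‖v + w‖ ^ α) / 2 ≤ g w :=
    rpow_norm_sub_add_rpow_norm_add_le h2 h4 v
  have hf : Integrable (fun w => ‖v - w‖ ^ α) ν :=
    (hg.const_mul 2).mono' (by fun_prop : Measurable _).aestronglyMeasurable <|
      ae_of_all _ fun w => by
        rw [norm_of_nonneg (by positivity)]
        linarith [hpt w, rpow_nonneg (norm_nonneg (v + w)) α]
  have hf' : Integrable (fun w => ‖v + w‖ ^ α) ν := by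
    simpa [sub_eq_add_neg] using hf.comp_neg
  have hsymm : ∫ w, ‖v + w‖ ^ α ∂ν = ∫ w, ‖v - w‖ ^ α ∂ν := by
    simpa [sub_eq_add_neg] using integral_neg_eq_self (fun w => ‖v - w‖ ^ α) ν
  calc ∫ w, ‖v - w‖ ^ α ∂ν = ∫ w, (‖v - w‖ ^ α + ‖v + w‖ ^ α) / 2 ∂ν := by
        rw [integral_div, integral_add hf hf', hsymm]
        ring
    _ ≤ ∫ w, g w ∂ν := integral_mono ((hf.add hf').div_const 2) hg hpt
    _ = _ := by
        rw [integral_add hg₂ (hhalf.const_mul _), integral_add hg₁ (hα.const_mul _),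
          integral_add (integrable_const _) (hsq.const_mul _)]
        simp [integral_const_mul]

theorem exists_integral_rpow_norm_sub_le [InnerProductSpace ℝ E] [IsProbabilityMeasure ν]
    [ν.IsNegInvariant] {α : ℝ} (h2 : 2 ≤ α) (h4 : α ≤ 4)
    (hα : Integrable (fun w => ‖w‖ ^ α) ν) :
    ∃ C : ℝ, 0 < C ∧ ∀ v : E, ∫ w, ‖v - w‖ ^ α ∂ν ≤ ‖v‖ ^ α + C * ‖v‖ ^ (α / 2) + C := by
  set a := α / 2 * ∫ w, ‖w‖ ^ 2 ∂ν
  set b := α / 2 * ∫ w, ‖w‖ ^ α ∂ν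
  set c := 2 ^ (α / 2) * ∫ w, ‖w‖ ^ (α / 2) ∂ν
  have ha : 0 ≤ a := mul_nonneg (by linarith) (integral_nonneg fun w => by positivity)
  have hb : 0 ≤ b := mul_nonneg (by linarith) (integral_nonneg fun w => by positivity)
  have hc : 0 ≤ c := mul_nonneg (by positivity) (integral_nonneg fun w => by positivity)
  refine ⟨a + b + c + 1, by positivity, fun v => ?_⟩
  have hv : ‖v‖ ^ (α - 2) ≤ 1 + ‖v‖ ^ (α / 2) :=
    rpow_le_one_add_rpow (norm_nonneg v) (by linarith) (by linarith)
  calc ∫ w, ‖v - w‖ ^ α ∂ν ≤ ‖v‖ ^ α + a * ‖v‖ ^ (α - 2) + b + c * ‖v‖ ^ (α / 2) := by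
        convert integral_rpow_norm_sub_le ν h2 h4 hα v using 1; ring
    _ ≤ ‖v‖ ^ α + (a + b + c + 1) * ‖v‖ ^ (α / 2) + (a + b + c + 1) := by
        nlinarith [mul_le_mul_of_nonneg_left hv ha, rpow_nonneg (norm_nonneg v) (α / 2)]

end SymmetricMeasure

theorem integrable_rpow_norm_mul_exp_neg_mul_sq_norm {E : Type*} [NormedAddCommGroup E]
    [NormedSpace ℝ E] [FiniteDimensional ℝ E] [Nontrivial E] [MeasurableSpace E] [BorelSpace E]
    (μ : Measure E) [μ.IsAddHaarMeasure] {b s : ℝ} (hb : 0 < b)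
    (hs : -(Module.finrank ℝ E : ℝ) < s) :
    Integrable (fun x : E => ‖x‖ ^ s * exp (-b * ‖x‖ ^ 2)) μ := by
  have hd : 1 ≤ Module.finrank ℝ E := Module.finrank_pos
  rw [integrable_fun_norm_addHaar μ (f := fun y => y ^ s * exp (-b * y ^ 2))]
  refine (integrableOn_rpow_mul_exp_neg_mul_sq hb (s := (Module.finrank ℝ E - 1 : ℕ) + s)
    (by push_cast [hd]; linarith)).congr_fun (fun y (hy : 0 < y) => ?_) measurableSet_Ioi
  simp only [rpow_add hy, rpow_natCast, smul_eq_mul, mul_assoc]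

lemma mu_nonneg (w : R3) : 0 ≤ mu w := by
  unfold mu; positivity

@[fun_prop]
lemma measurable_mu : Measurable mu := by
  unfold mu; fun_prop

lemma mu_neg (w : R3) : mu (-w) = mu w := by
  simp [mu]

lemma integrable_rpow_norm_mul_mu {β : ℝ} (hβ : -3 < β) :
    Integrable fun w => ‖w‖ ^ β * mu w := by
  refine ((integrable_rpow_norm_mul_exp_neg_mul_sq_norm volume (b := 1 / 2) (by norm_num)
    (by simpa using hβ)).const_mul ((2 * π) ^ (-(3:ℝ)/2))).congr (ae_of_all _ fun w => ?_)
  simp only [mu]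
  ring_nf

lemma integral_mu : ∫ w, mu w = 1 := calc
  ∫ w, mu w = (2 * π) ^ (-(3:ℝ)/2) * ∫ w : R3, exp (-(1 / 2) * ‖w‖ ^ 2) := by
    rw [← integral_const_mul]; congr! 2 with w; rw [mu]; ring_nf
  _ = 1 := by
    rw [GaussianFourier.integral_rexp_neg_mul_sq_norm (by norm_num), finrank_euclideanSpace_fin,
      show π / (1 / 2) = 2 * π by ring, ← rpow_add (by positivity)]
    norm_num

def maxwellian : Measure R3 := volume.withDensity fun w => ENNReal.ofReal (mu w)

lemma integral_maxwellian (g : R3 → ℝ) : ∫ w, g w ∂maxwellian = ∫ w, g w * mu w := by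
  rw [maxwellian, integral_withDensity_eq_integral_toReal_smul (by fun_prop)
    (ae_of_all _ fun _ => ENNReal.ofReal_lt_top)]
  simp [ENNReal.toReal_ofReal (mu_nonneg _), mul_comm]

instance : IsProbabilityMeasure maxwellian := by
  have hmu : Integrable mu := by simpa using integrable_rpow_norm_mul_mu (β := 0) (by norm_num)
  constructor
  rw [maxwellian, withDensity_apply _ MeasurableSet.univ, Measure.restrict_univ,
    ← ofReal_integral_eq_lintegral_ofReal hmu (ae_of_all _ mu_nonneg), integral_mu,
    ENNReal.ofReal_one]

instance : maxwellian.IsNegInvariant := by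
  constructor
  ext s hs
  rw [Measure.neg_def, Measure.map_apply measurable_neg hs, maxwellian,
    withDensity_apply _ (measurable_neg hs), withDensity_apply _ hs]
  simpa only [mu_neg] using (Measure.measurePreserving_neg volume).setLIntegral_comp_preimage hs
    (f := fun w => ENNReal.ofReal (mu w)) (by fun_prop)

lemma integrable_rpow_norm_maxwellian {β : ℝ} (hβ : -3 < β) :
    Integrable (fun w => ‖w‖ ^ β) maxwellian := by
  rw [maxwellian, integrable_withDensity_iff_integrable_smul' (by fun_prop)
    (ae_of_all _ fun _ => ENNReal.ofReal_lt_top)]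
  simpa [ENNReal.toReal_ofReal (mu_nonneg _), mul_comm] using integrable_rpow_norm_mul_mu hβ

theorem stmt0 (α : ℝ) (h1 : 2 < α) (h2 : α ≤ 3) :
    ∃ C : ℝ, 0 < C ∧ ∀ v : R3,
      (∫ w : R3, ‖v - w‖ ^ α * mu w) ≤ ‖v‖ ^ α + C * ‖v‖ ^ (α / 2) + C := by
  obtain ⟨C, hC, hbound⟩ := exists_integral_rpow_norm_sub_le maxwellian h1.le (by linarith)
    (integrable_rpow_norm_maxwellian (by linarith))
  exact ⟨C, hC, fun v => by simpa only [integral_maxwellian] using hbound v⟩
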